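/- arXiv:0902.0540 — 7 statements merged into one kernel-verified Lean document; each statement's English description precedes it below -/
import Mathlib

section
/- Let 0 ≤ n ≤ 7 and let d, a₁, …, aₙ be integers with 3d + Σᵢaᵢ = 0 and d² − Σᵢaᵢ² = −2. Then exactly one of the following holds: (binary) d = 0 and there are indices i ≠ j with aᵢ = 1, aⱼ = −1 and aₖ = 0 for all k ∉ {i,j}; (ternary) d = ε for some ε ∈ {1,−1}, exactly three of the aᵢ equal −ε, and the rest are 0; (senary) d = 2ε for some ε ∈ {1,−1}, exactly six of the aᵢ equal −ε, and the rest are 0. Consequently a Lagrangian sphere in 𝔻ₙ represents a class of the form Eᵢ−Eⱼ, ±(H−Eᵢ−Eⱼ−Eₖ) (possible only if n ≥ 3), or ±(2H−E_{i₁}−⋯−E_{i₆}) (possible only if n ≥ 6). -/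
/-- The class `dH + Σ aᵢEᵢ` is *binary*: `d = 0` and `a` is `Eᵢ - Eⱼ` for some `i ≠ j`. -/
def IsBinaryClass (n : ℕ) (d : ℤ) (a : Fin n → ℤ) : Prop :=
  d = 0 ∧ ∃ i j : Fin n, i ≠ j ∧ a i = 1 ∧ a j = -1 ∧
    ∀ k : Fin n, k ≠ i → k ≠ j → a k = 0

/-- The class `dH + Σ aᵢEᵢ` is *ternary*: `d = ε ∈ {1,-1}`, exactly three of the `aᵢ`
equal `-ε` and the rest are `0`. -/
def IsTernaryClass (n : ℕ) (d : ℤ) (a : Fin n → ℤ) : Prop :=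
  ∃ ε : ℤ, (ε = 1 ∨ ε = -1) ∧ d = ε ∧
    (Finset.univ.filter fun i : Fin n => a i = -ε).card = 3 ∧
    ∀ i : Fin n, a i ≠ -ε → a i = 0

/-- The class `dH + Σ aᵢEᵢ` is *senary*: `d = 2ε` for `ε ∈ {1,-1}`, exactly six of the
`aᵢ` equal `-ε` and the rest are `0`. -/
def IsSenaryClass (n : ℕ) (d : ℤ) (a : Fin n → ℤ) : Prop :=
  ∃ ε : ℤ, (ε = 1 ∨ ε = -1) ∧ d = 2 * ε ∧
    (Finset.univ.filter fun i : Fin n => a i = -ε).card = 6 ∧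
    ∀ i : Fin n, a i ≠ -ε → a i = 0

/-!
Cauchy–Schwarz gives `9 d² = (∑ aᵢ)² ≤ n ∑ aᵢ² = n (d² + 2)`, so `n ≤ 7` forces `|d| ≤ 2`.
If `d = ε` or `d = 2ε` with `ε = ±1`, then `∑ aᵢ (aᵢ + ε) = ∑ aᵢ² + ε ∑ aᵢ = 0`, and since
`x (x + 1) ≥ 0` on `ℤ` every `aᵢ` lies in `{0, -ε}`; counting gives `3 |d|` entries `-ε`.
If `d = 0`, then `∑ aᵢ² = 2` leaves exactly two nonzero entries, both `±1`, of opposite signs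
because `∑ aᵢ = 0`. The three kinds are told apart by `|d|`.
-/

open Finset

lemma Int.mul_add_one_nonneg (x : ℤ) : 0 ≤ x * (x + 1) := by
  rcases le_or_gt 0 x with hx | hx
  · positivity
  · exact mul_nonneg_of_nonpos_of_nonpos hx.le (by omega)

lemma Int.eq_neg_one_or_zero_or_one_of_sq_le_two {x : ℤ} (hx : x ^ 2 ≤ 2) :
    x = -1 ∨ x = 0 ∨ x = 1 := by
  have : -1 ≤ x ∧ x ≤ 1 := by constructor <;> nlinarith
  omega

section
variable {ι : Type*} [Fintype ι]

lemma Finset.sum_eq_card_filter_nsmul {M : Type*} [AddCommMonoid M] [DecidableEq M]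
    {f : ι → M} {c : M} (hf : ∀ i, f i = 0 ∨ f i = c) :
    ∑ i, f i = #{i | f i = c} • c := by
  rw [← sum_filter_of_ne fun i _ hi => (hf i).resolve_left hi]
  exact sum_eq_card_nsmul fun i hi => (mem_filter.1 hi).2

lemma eq_zero_or_eq_neg_of_sum_mul_add_eq_zero {a : ι → ℤ} {ε : ℤ} (hε : ε = 1 ∨ ε = -1)
    (h : ∑ i, a i * (a i + ε) = 0) (i : ι) : a i = 0 ∨ a i = -ε := by
  have hterm : ∀ j, a j * (a j + ε) = ε * a j * (ε * a j + 1) := fun j => by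
    rcases hε with rfl | rfl <;> ring
  have hnonneg : ∀ j ∈ univ, 0 ≤ a j * (a j + ε) := fun j _ =>
    hterm j ▸ Int.mul_add_one_nonneg _
  rcases mul_eq_zero.1 ((sum_eq_zero_iff_of_nonneg hnonneg).1 h i (mem_univ i)) with h | h
  · exact .inl h
  · exact .inr (by linarith)

lemma card_filter_eq_neg_of_sum_eq_of_sum_sq_eq {a : ι → ℤ} {ε : ℤ} (hε : ε = 1 ∨ ε = -1)
    {m : ℕ} (hsum : ∑ i, a i = -(m * ε)) (hsq : ∑ i, a i ^ 2 = m) :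
    #{i | a i = -ε} = m ∧ ∀ i, a i ≠ -ε → a i = 0 := by
  have hε2 : ε * ε = 1 := by rcases hε with rfl | rfl <;> norm_num
  have hzero : ∑ i, a i * (a i + ε) = 0 := by
    simp only [mul_add, sum_add_distrib, ← sum_mul, ← sq, hsq, hsum]
    linear_combination -(m : ℤ) * hε2
  have hval := eq_zero_or_eq_neg_of_sum_mul_add_eq_zero hε hzero
  have hcard := hsum ▸ sum_eq_card_filter_nsmul hval
  refine ⟨?_, fun i hi => (hval i).resolve_right hi⟩
  have : ((#{i | a i = -ε} : ℕ) : ℤ) = m := by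
    rw [nsmul_eq_mul] at hcard
    linear_combination ε * hcard - (#{i | a i = -ε} - m) * hε2
  exact_mod_cast this

lemma exists_eq_one_eq_neg_one_of_sum_eq_zero_of_sum_sq_eq_two {a : ι → ℤ}
    (hsum : ∑ i, a i = 0) (hsq : ∑ i, a i ^ 2 = 2) :
    ∃ i j, i ≠ j ∧ a i = 1 ∧ a j = -1 ∧ ∀ k, k ≠ i → k ≠ j → a k = 0 := by
  classical
  have hunit : ∀ i, a i ≠ 0 → a i = 1 ∨ a i = -1 := fun i hi => by
    have := single_le_sum (fun j _ => sq_nonneg (a j)) (mem_univ i)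
    rcases Int.eq_neg_one_or_zero_or_one_of_sq_le_two (hsq ▸ this) with h | h | h <;> tauto
  have hsupp : ∀ f : ι → ℤ, (∀ i, a i = 0 → f i = 0) → ∑ i ∈ {i | a i ≠ 0}, f i = ∑ i, f i :=
    fun f hf => sum_filter_of_ne fun i _ => mt (hf i)
  have hcard : #{i | a i ≠ 0} = 2 := by
    have hsq_one : ∀ i ∈ ({i | a i ≠ 0} : Finset ι), a i ^ 2 = 1 := fun i hi => by
      rcases hunit i (mem_filter.1 hi).2 with h | h <;> simp [h]
    have := hsupp (a · ^ 2) fun i hi => by simp [hi]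
    rw [sum_congr rfl hsq_one, sum_const, nsmul_one, hsq] at this
    exact_mod_cast this
  obtain ⟨i, j, hij, hS⟩ := card_eq_two.1 hcard
  have hmem : ∀ k, a k ≠ 0 ↔ k = i ∨ k = j := fun k => by
    simpa using Finset.ext_iff.1 hS k
  have hij_sum : a i + a j = 0 := by
    rw [← sum_pair hij, ← hS, hsupp a fun _ => id, hsum]
  have hzero : ∀ k, k ≠ i → k ≠ j → a k = 0 := fun k hki hkj =>
    not_not.1 fun h => ((hmem k).1 h).elim hki hkj
  rcases hunit i ((hmem i).2 (.inl rfl)) with hi | hi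
  · exact ⟨i, j, hij, hi, by linarith, hzero⟩
  · exact ⟨j, i, hij.symm, by linarith, hi, fun k hkj hki => hzero k hki hkj⟩

end

section
variable {n : ℕ} {d : ℤ} {a : Fin n → ℤ}

lemma IsTernaryClass.natAbs_eq_one (h : IsTernaryClass n d a) : d.natAbs = 1 := by
  obtain ⟨ε, hε | hε, rfl, -⟩ := h <;> simp [hε]

lemma IsSenaryClass.natAbs_eq_two (h : IsSenaryClass n d a) : d.natAbs = 2 := by
  obtain ⟨ε, hε | hε, rfl, -⟩ := h <;> simp [hε]

section
variable (hc1 : 3 * d + ∑ i, a i = 0) (hsq : d ^ 2 - ∑ i, a i ^ 2 = -2)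
include hc1 hsq

lemma abs_le_two_of_le_seven (hn : n ≤ 7) : |d| ≤ 2 := by
  have hcs := sq_sum_le_card_mul_sum_sq (s := univ) (f := a)
  rw [card_univ, Fintype.card_fin, show ∑ i, a i = -3 * d by linarith,
    show ∑ i, a i ^ 2 = d ^ 2 + 2 by linarith] at hcs
  have hn' : (n : ℤ) ≤ 7 := by exact_mod_cast hn
  have hd : d ^ 2 ≤ 7 := by nlinarith
  exact abs_le.2 ⟨by nlinarith, by nlinarith⟩

lemma isBinaryClass_of_eq_zero (hd : d = 0) : IsBinaryClass n d a := by
  subst d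
  exact ⟨rfl,
    exists_eq_one_eq_neg_one_of_sum_eq_zero_of_sum_sq_eq_two (by linarith) (by linarith)⟩

lemma isTernaryClass_of_eq {ε : ℤ} (hε : ε = 1 ∨ ε = -1) (hd : d = ε) :
    IsTernaryClass n d a := by
  subst d
  refine ⟨ε, hε, rfl, card_filter_eq_neg_of_sum_eq_of_sum_sq_eq (m := 3) hε ?_ ?_⟩ <;>
    rcases hε with rfl | rfl <;> push_cast <;> linarith

lemma isSenaryClass_of_eq {ε : ℤ} (hε : ε = 1 ∨ ε = -1) (hd : d = 2 * ε) :
    IsSenaryClass n d a := by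
  subst d
  refine ⟨ε, hε, rfl, card_filter_eq_neg_of_sum_eq_of_sum_sq_eq (m := 6) hε ?_ ?_⟩ <;>
    rcases hε with rfl | rfl <;> push_cast <;> linarith

end

end

/-- For `0 ≤ n ≤ 7`, any integer class `dH + Σ aᵢEᵢ` in `H₂(𝔻ₙ;ℤ)` with
`c₁ = 3d + Σ aᵢ = 0` and square `d² - Σ aᵢ² = -2` is of exactly one of the three kinds:
binary, ternary or senary.  Hence a Lagrangian sphere in `𝔻ₙ` represents a class of the
form `Eᵢ - Eⱼ`, `±(H - Eᵢ - Eⱼ - Eₖ)` (only if `n ≥ 3`), or `±(2H - E_{i₁} - ⋯ - E_{i₆})`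
(only if `n ≥ 6`). -/
theorem lagrangian_sphere_classes_in_delPezzo (n : ℕ) (hn : n ≤ 7)
    (d : ℤ) (a : Fin n → ℤ)
    (hc1 : 3 * d + ∑ i, a i = 0)
    (hsq : d ^ 2 - ∑ i, (a i) ^ 2 = -2) :
    (IsBinaryClass n d a ∧ ¬ IsTernaryClass n d a ∧ ¬ IsSenaryClass n d a) ∨
    (¬ IsBinaryClass n d a ∧ IsTernaryClass n d a ∧ ¬ IsSenaryClass n d a) ∨
    (¬ IsBinaryClass n d a ∧ ¬ IsTernaryClass n d a ∧ IsSenaryClass n d a) := by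
  have hB : IsBinaryClass n d a → d.natAbs = 0 := fun h => by simp [h.1]
  have hT : IsTernaryClass n d a → d.natAbs = 1 := IsTernaryClass.natAbs_eq_one
  have hS : IsSenaryClass n d a → d.natAbs = 2 := IsSenaryClass.natAbs_eq_two
  obtain ⟨hlo, hhi⟩ := abs_le.1 (abs_le_two_of_le_seven hc1 hsq hn)
  interval_cases d
  · exact .inr <| .inr ⟨mt hB (by decide), mt hT (by decide),
      isSenaryClass_of_eq hc1 hsq (.inr rfl) (by norm_num)⟩
  · exact .inr <| .inl ⟨mt hB (by decide), isTernaryClass_of_eq hc1 hsq (.inr rfl) rfl,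
      mt hS (by decide)⟩
  · exact .inl ⟨isBinaryClass_of_eq_zero hc1 hsq rfl, mt hT (by decide), mt hS (by decide)⟩
  · exact .inr <| .inl ⟨mt hB (by decide), isTernaryClass_of_eq hc1 hsq (.inl rfl) rfl,
      mt hS (by decide)⟩
  · exact .inr <| .inr ⟨mt hB (by decide), mt hT (by decide),
      isSenaryClass_of_eq hc1 hsq (.inl rfl) (by norm_num)⟩
end

section
/- Let 0 ≤ n ≤ 7 and let d, a₁, …, aₙ be integers with 3d + Σᵢaᵢ = 1. Then d² − Σᵢaᵢ² < 0. (Hence any class in H₂(𝔻ₙ;ℤ), n ≤ 7, with c₁ = 1 has strictly negative self-intersection; this fails for n = 8 because of the class 3H − E₁ − ⋯ − E₈.) -/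
/-!
Write `s = ∑ aᵢ = 1 - 3d` and `Q = ∑ aᵢ²`. Since `|x| ≤ x²` on integers, `|s| ≤ Q`, and by
Cauchy–Schwarz `s² ≤ n Q ≤ 7 Q`. The second bound gives `d² < Q` unless `7d² ≥ (1 - 3d)²`, which
for an integer `d` only happens at `d = 1, 2`; there the first bound `Q ≥ |1 - 3d| ∈ {2, 5}` suffices.
-/

open Finset

theorem Int.abs_sum_le_sum_sq {ι : Type*} (s : Finset ι) (a : ι → ℤ) :
    |∑ i ∈ s, a i| ≤ ∑ i ∈ s, a i ^ 2 :=
  (abs_sum_le_sum_abs a s).trans <| sum_le_sum fun i _ =>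
    (Int.abs_eq_natAbs (a i)).trans_le (Int.natAbs_le_self_sq (a i))

theorem sq_lt_of_abs_one_sub_three_mul_le {d Q : ℤ} (habs : |1 - 3 * d| ≤ Q)
    (hsq : (1 - 3 * d) ^ 2 ≤ 7 * Q) : d ^ 2 < Q := by
  rcases eq_or_ne d 1 with rfl | hd₁
  · norm_num at habs; linarith
  rcases eq_or_ne d 2 with rfl | hd₂
  · norm_num at habs; linarith
  have hfactor : 2 ≤ (d - 1) * (d - 2) := by
    rcases lt_or_gt_of_ne hd₁ with h | h
    · nlinarith
    · have : 3 ≤ d := by omega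
      nlinarith
  nlinarith

/-- For `0 ≤ n ≤ 7` and integers `d, a₁, …, aₙ` with `3d + Σᵢ aᵢ = 1`
(i.e. the class `dH + Σ aᵢEᵢ ∈ H₂(𝔻ₙ;ℤ)` has `c₁ = 1`, equivalently symplectic area `1`
for the monotone form), the self-intersection `d² − Σᵢ aᵢ²` is strictly negative. -/
theorem area_one_class_has_negative_square (n : ℕ) (hn : n ≤ 7)
    (d : ℤ) (a : Fin n → ℤ)
    (hc1 : 3 * d + ∑ i, a i = 1) :
    d ^ 2 - ∑ i, (a i) ^ 2 < 0 := by
  have hs : ∑ i, a i = 1 - 3 * d := by linarith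
  have hsq : (∑ i, a i) ^ 2 ≤ 7 * ∑ i, a i ^ 2 :=
    calc (∑ i, a i) ^ 2 ≤ n * ∑ i, a i ^ 2 := by simpa using sq_sum_le_card_mul_sum_sq (s := univ) (f := a)
      _ ≤ 7 * ∑ i, a i ^ 2 :=
        mul_le_mul_of_nonneg_right (by exact_mod_cast hn) (sum_nonneg fun i _ => sq_nonneg (a i))
  rw [hs] at hsq
  exact sub_neg.mpr (sq_lt_of_abs_one_sub_three_mul_le (hs ▸ Int.abs_sum_le_sum_sq univ a) hsq)
end

section
/- The map ϖ : T*S² → 𝒬 is a bijection from T*S² = {(u,v) ∈ ℝ³×ℝ³ : ‖u‖ = 1, ⟨u,v⟩ = 0} onto the affine quadric 𝒬 = {x ∈ ℂ³ : x₁² + x₂² + x₃² = 1}. -/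
open RealInnerProductSpace
open scoped Classical

/-- `T*S² = {(u,v) ∈ ℝ³×ℝ³ : ‖u‖ = 1, ⟨u,v⟩ = 0}`. -/
def cotangentS2 : Set (EuclideanSpace ℝ (Fin 3) × EuclideanSpace ℝ (Fin 3)) :=
  {p | ‖p.1‖ = 1 ∧ ⟪p.1, p.2⟫ = 0}

/-- The affine quadric `𝒬 = {x ∈ ℂ³ : x₁² + x₂² + x₃² = 1}`. -/
def affineQuadric : Set (Fin 3 → ℂ) :=
  {x | x 0 ^ 2 + x 1 ^ 2 + x 2 ^ 2 = 1}

/-- The map `ϖ : T*S² → ℂ³`, `ϖ(u,v)ⱼ = uⱼ cosh‖v‖ + i vⱼ sinh‖v‖/‖v‖`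
(with `sinh‖v‖/‖v‖` interpreted as `1` when `v = 0`). -/
noncomputable def varpi (u v : EuclideanSpace ℝ (Fin 3)) : Fin 3 → ℂ := fun j =>
  (u j : ℂ) * (Real.cosh ‖v‖ : ℝ) +
    Complex.I * (v j : ℂ) * ((if v = 0 then 1 else Real.sinh ‖v‖ / ‖v‖ : ℝ) : ℂ)

/-!
Writing `x = a + i b` with `a, b ∈ ℝ³`, `x` lies on `𝒬` iff `‖a‖² - ‖b‖² = 1` and `⟨a, b⟩ = 0`.
For `x = ϖ(u, v)` one has `a = cosh‖v‖ • u` and `b = (sinh‖v‖ / ‖v‖) • v`, so `‖a‖ = cosh‖v‖` and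
`‖b‖ = sinh‖v‖`. Hence `ϖ` maps `T*S²` into `𝒬`, and `x` determines `‖v‖ = arsinh‖b‖` and then `u`
and `v`; conversely `(a / ‖a‖, arsinh‖b‖ • b / ‖b‖)` is a preimage of any `x ∈ 𝒬`.
-/

namespace Real

noncomputable def sinhc (r : ℝ) : ℝ := if r = 0 then 1 else sinh r / r

lemma sinhc_mul_self (r : ℝ) : sinhc r * r = sinh r := by
  by_cases hr : r = 0 <;> simp [sinhc, hr]

lemma sinhc_pos (r : ℝ) : 0 < sinhc r := by
  rcases lt_trichotomy r 0 with hr | rfl | hr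
  · simpa [sinhc, hr.ne] using div_pos_of_neg_of_neg (sinh_neg_iff.2 hr) hr
  · simp [sinhc]
  · simpa [sinhc, hr.ne'] using div_pos (sinh_pos_iff.2 hr) hr

end Real

section ReIm

variable {ι : Type*}

def reVec (x : ι → ℂ) : EuclideanSpace ℝ ι := WithLp.toLp 2 fun j => (x j).re

def imVec (x : ι → ℂ) : EuclideanSpace ℝ ι := WithLp.toLp 2 fun j => (x j).im

@[simp] lemma reVec_apply (x : ι → ℂ) (j : ι) : reVec x j = (x j).re := rfl

@[simp] lemma imVec_apply (x : ι → ℂ) (j : ι) : imVec x j = (x j).im := rfl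

lemma ext_reVec_imVec {x y : ι → ℂ} (hre : reVec x = reVec y) (him : imVec x = imVec y) :
    x = y :=
  funext fun j => Complex.ext (congrArg (· j) hre) (congrArg (· j) him)

lemma sum_sq_eq_one_iff [Fintype ι] (x : ι → ℂ) :
    ∑ j, x j ^ 2 = 1 ↔ ‖reVec x‖ ^ 2 - ‖imVec x‖ ^ 2 = 1 ∧ ⟪reVec x, imVec x⟫ = 0 := by
  have hre : (∑ j, x j ^ 2).re = ‖reVec x‖ ^ 2 - ‖imVec x‖ ^ 2 := by
    rw [EuclideanSpace.real_norm_sq_eq, EuclideanSpace.real_norm_sq_eq, ← Finset.sum_sub_distrib,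
      Complex.re_sum]
    simp [sq]
  have him : (∑ j, x j ^ 2).im = 2 * ⟪reVec x, imVec x⟫ := by
    rw [PiLp.inner_apply, Finset.mul_sum, Complex.im_sum]
    exact Finset.sum_congr rfl fun j _ => by simp [sq]; ring
  simp [Complex.ext_iff, hre, him]

end ReIm

lemma mem_affineQuadric_iff (x : Fin 3 → ℂ) :
    x ∈ affineQuadric ↔ ‖reVec x‖ ^ 2 - ‖imVec x‖ ^ 2 = 1 ∧ ⟪reVec x, imVec x⟫ = 0 := by
  rw [← sum_sq_eq_one_iff, Fin.sum_univ_three]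
  rfl

lemma varpi_eq (u v : EuclideanSpace ℝ (Fin 3)) :
    varpi u v = fun j => (u j : ℂ) * Real.cosh ‖v‖ + Complex.I * v j * Real.sinhc ‖v‖ := by
  funext j
  simp only [varpi, Real.sinhc, norm_eq_zero]

lemma reVec_varpi (u v : EuclideanSpace ℝ (Fin 3)) : reVec (varpi u v) = Real.cosh ‖v‖ • u := by
  ext j; simp [varpi_eq, mul_comm]

lemma imVec_varpi (u v : EuclideanSpace ℝ (Fin 3)) : imVec (varpi u v) = Real.sinhc ‖v‖ • v := by
  ext j; simp [varpi_eq, mul_comm]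

lemma norm_reVec_varpi {u : EuclideanSpace ℝ (Fin 3)} (hu : ‖u‖ = 1) (v : EuclideanSpace ℝ (Fin 3)) :
    ‖reVec (varpi u v)‖ = Real.cosh ‖v‖ := by
  rw [reVec_varpi, norm_smul, hu, mul_one, Real.norm_eq_abs, abs_of_pos (Real.cosh_pos _)]

lemma norm_imVec_varpi (u v : EuclideanSpace ℝ (Fin 3)) :
    ‖imVec (varpi u v)‖ = Real.sinh ‖v‖ := by
  rw [imVec_varpi, norm_smul, Real.norm_eq_abs, abs_of_pos (Real.sinhc_pos _),
    Real.sinhc_mul_self]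

lemma varpi_mem_affineQuadric {u v : EuclideanSpace ℝ (Fin 3)} (huv : (u, v) ∈ cotangentS2) :
    varpi u v ∈ affineQuadric := by
  obtain ⟨hu, horth⟩ := huv
  rw [mem_affineQuadric_iff, norm_reVec_varpi hu, norm_imVec_varpi, reVec_varpi, imVec_varpi,
    real_inner_smul_left, real_inner_smul_right, horth]
  exact ⟨Real.cosh_sq_sub_sinh_sq _, by simp⟩

lemma varpi_injective :
    Function.Injective fun p : EuclideanSpace ℝ (Fin 3) × EuclideanSpace ℝ (Fin 3) =>
      varpi p.1 p.2 := by
  rintro ⟨u, v⟩ ⟨u', v'⟩ (h : varpi u v = varpi u' v')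
  have hv : ‖v‖ = ‖v'‖ := Real.sinh_injective <| by
    rw [← norm_imVec_varpi u, ← norm_imVec_varpi u', h]
  have hre := congrArg reVec h
  have him := congrArg imVec h
  rw [reVec_varpi, reVec_varpi, hv] at hre
  rw [imVec_varpi, imVec_varpi, hv] at him
  exact Prod.ext (smul_right_injective _ (Real.cosh_pos _).ne' hre)
    (smul_right_injective _ (Real.sinhc_pos _).ne' him)

noncomputable def varpiInv (x : Fin 3 → ℂ) : EuclideanSpace ℝ (Fin 3) × EuclideanSpace ℝ (Fin 3) :=
  (‖reVec x‖⁻¹ • reVec x, (Real.arsinh ‖imVec x‖ / ‖imVec x‖) • imVec x)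

lemma norm_varpiInv_snd (x : Fin 3 → ℂ) : ‖(varpiInv x).2‖ = Real.arsinh ‖imVec x‖ := by
  rw [varpiInv, norm_smul, Real.norm_eq_abs,
    abs_of_nonneg (div_nonneg (Real.arsinh_nonneg_iff.2 (norm_nonneg _)) (norm_nonneg _)),
    div_mul_cancel_of_imp fun h => by rw [h, Real.arsinh_zero]]

lemma varpiInv_mem_cotangentS2 {x : Fin 3 → ℂ} (hx : x ∈ affineQuadric) :
    varpiInv x ∈ cotangentS2 := by
  obtain ⟨hnorm, horth⟩ := (mem_affineQuadric_iff x).1 hx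
  have ha : ‖reVec x‖ ≠ 0 := by
    intro h; nlinarith [sq_nonneg ‖imVec x‖]
  refine ⟨?_, ?_⟩
  · rw [varpiInv, norm_smul, norm_inv, norm_norm, inv_mul_cancel₀ ha]
  · rw [varpiInv, real_inner_smul_left, real_inner_smul_right, horth, mul_zero, mul_zero]

lemma varpi_varpiInv {x : Fin 3 → ℂ} (hx : x ∈ affineQuadric) :
    varpi (varpiInv x).1 (varpiInv x).2 = x := by
  obtain ⟨hnorm, -⟩ := (mem_affineQuadric_iff x).1 hx
  have hcosh : Real.cosh (Real.arsinh ‖imVec x‖) = ‖reVec x‖ := by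
    rw [Real.cosh_arsinh, ← hnorm, sub_add_cancel, Real.sqrt_sq (norm_nonneg _)]
  have ha : ‖reVec x‖ ≠ 0 := by
    rw [← hcosh]; exact (Real.cosh_pos _).ne'
  apply ext_reVec_imVec
  · rw [reVec_varpi, norm_varpiInv_snd, hcosh, varpiInv, smul_inv_smul₀ ha]
  · rw [imVec_varpi, norm_varpiInv_snd, varpiInv]
    rcases eq_or_ne (imVec x) 0 with hb | hb
    · rw [hb, smul_zero, smul_zero]
    · rw [smul_smul, mul_div_assoc', Real.sinhc_mul_self, Real.sinh_arsinh,
        div_self (norm_ne_zero_iff.2 hb), one_smul]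

/-- `ϖ` is a bijection from `T*S²` onto the affine quadric `𝒬`. -/
theorem varpi_bijOn_quadric :
    Set.BijOn (fun p : EuclideanSpace ℝ (Fin 3) × EuclideanSpace ℝ (Fin 3) =>
      varpi p.1 p.2) cotangentS2 affineQuadric :=
  ⟨fun _ => varpi_mem_affineQuadric, varpi_injective.injOn,
    fun x hx => ⟨varpiInv x, varpiInv_mem_cotangentS2 hx, varpi_varpiInv hx⟩⟩
end

section
/- For every p ∈ ℂ³ with p₁² + p₂² + p₃² = 1 there are exactly two complex lines through p contained in the quadric 𝒬: there exist nonzero vectors w⁺, w⁻ ∈ ℂ³, neither a complex scalar multiple of the other, such that for every nonzero w ∈ ℂ³ the line {p + tw : t ∈ ℂ} is contained in 𝒬 if and only if w is a complex scalar multiple of w⁺ or of w⁻. -/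
private lemma master (p u : Fin 3 → ℂ)
    (hp : p 0 ^ 2 + p 1 ^ 2 + p 2 ^ 2 = 1)
    (hpu : (p 0 * u 0 + p 1 * u 1 + p 2 * u 2) = 0)
    (hs : (u 0 ^ 2 + u 1 ^ 2 + u 2 ^ 2) ≠ 0) :
    ∃ wp wm : Fin 3 → ℂ, wp ≠ 0 ∧ wm ≠ 0 ∧
      (¬ ∃ c : ℂ, wm = c • wp) ∧ (¬ ∃ c : ℂ, wp = c • wm) ∧
      ∀ w : Fin 3 → ℂ, w ≠ 0 →
        ({x | ∃ t : ℂ, x = p + t • w} ⊆ affineQuadric ↔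
          (∃ c : ℂ, w = c • wp) ∨ (∃ c : ℂ, w = c • wm)) := by
  refine ⟨![(u 0 + Complex.I * (p 1 * u 2 - p 2 * u 1)), (u 1 + Complex.I * (p 2 * u 0 - p 0 * u 2)), (u 2 + Complex.I * (p 0 * u 1 - p 1 * u 0))],
      ![(u 0 - Complex.I * (p 1 * u 2 - p 2 * u 1)), (u 1 - Complex.I * (p 2 * u 0 - p 0 * u 2)), (u 2 - Complex.I * (p 0 * u 1 - p 1 * u 0))], ?_, ?_, ?_, ?_, ?_⟩
  · intro h
    apply hs
    have e0 : u 0 + Complex.I * (p 1 * u 2 - p 2 * u 1) = 0 := by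
      simpa using congrFun h 0
    have e1 : u 1 + Complex.I * (p 2 * u 0 - p 0 * u 2) = 0 := by
      simpa using congrFun h 1
    have e2 : u 2 + Complex.I * (p 0 * u 1 - p 1 * u 0) = 0 := by
      simpa using congrFun h 2
    linear_combination u 0 * e0 + u 1 * e1 + u 2 * e2
  · intro h
    apply hs
    have e0 : u 0 - Complex.I * (p 1 * u 2 - p 2 * u 1) = 0 := by
      simpa using congrFun h 0
    have e1 : u 1 - Complex.I * (p 2 * u 0 - p 0 * u 2) = 0 := by
      simpa using congrFun h 1
    have e2 : u 2 - Complex.I * (p 0 * u 1 - p 1 * u 0) = 0 := by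
      simpa using congrFun h 2
    linear_combination u 0 * e0 + u 1 * e1 + u 2 * e2
  · rintro ⟨c, h⟩
    apply hs
    have e0 := congrFun h 0
    simp only [Matrix.cons_val_zero, Matrix.cons_val_one, Matrix.cons_val_two,
      Matrix.head_cons, Matrix.tail_cons, Pi.smul_apply, smul_eq_mul] at e0
    have e1 := congrFun h 1
    simp only [Matrix.cons_val_zero, Matrix.cons_val_one, Matrix.cons_val_two,
      Matrix.head_cons, Matrix.tail_cons, Pi.smul_apply, smul_eq_mul] at e1
    have e2 := congrFun h 2
    simp only [Matrix.cons_val_zero, Matrix.cons_val_one, Matrix.cons_val_two,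
      Matrix.head_cons, Matrix.tail_cons, Pi.smul_apply, smul_eq_mul] at e2
    linear_combination ((u 0 + Complex.I * (p 1 * u 2 - p 2 * u 1)) / 2) * e0 + ((u 1 + Complex.I * (p 2 * u 0 - p 0 * u 2)) / 2) * e1 + ((u 2 + Complex.I * (p 0 * u 1 - p 1 * u 0)) / 2) * e2
      - ((1 + c) * (u 0 ^ 2 + u 1 ^ 2 + u 2 ^ 2) / 2) * hp + ((1 + c) * (p 0 * u 0 + p 1 * u 1 + p 2 * u 2) / 2) * hpu
      + ((1 + c) * ((p 1 * u 2 - p 2 * u 1) ^ 2 + (p 2 * u 0 - p 0 * u 2) ^ 2 + (p 0 * u 1 - p 1 * u 0) ^ 2) / 2) * Complex.I_sq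
  · rintro ⟨c, h⟩
    apply hs
    have e0 := congrFun h 0
    simp only [Matrix.cons_val_zero, Matrix.cons_val_one, Matrix.cons_val_two,
      Matrix.head_cons, Matrix.tail_cons, Pi.smul_apply, smul_eq_mul] at e0
    have e1 := congrFun h 1
    simp only [Matrix.cons_val_zero, Matrix.cons_val_one, Matrix.cons_val_two,
      Matrix.head_cons, Matrix.tail_cons, Pi.smul_apply, smul_eq_mul] at e1
    have e2 := congrFun h 2
    simp only [Matrix.cons_val_zero, Matrix.cons_val_one, Matrix.cons_val_two,
      Matrix.head_cons, Matrix.tail_cons, Pi.smul_apply, smul_eq_mul] at e2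
    linear_combination ((u 0 - Complex.I * (p 1 * u 2 - p 2 * u 1)) / 2) * e0 + ((u 1 - Complex.I * (p 2 * u 0 - p 0 * u 2)) / 2) * e1 + ((u 2 - Complex.I * (p 0 * u 1 - p 1 * u 0)) / 2) * e2
      - ((1 + c) * (u 0 ^ 2 + u 1 ^ 2 + u 2 ^ 2) / 2) * hp + ((1 + c) * (p 0 * u 0 + p 1 * u 1 + p 2 * u 2) / 2) * hpu
      + ((1 + c) * ((p 1 * u 2 - p 2 * u 1) ^ 2 + (p 2 * u 0 - p 0 * u 2) ^ 2 + (p 0 * u 1 - p 1 * u 0) ^ 2) / 2) * Complex.I_sq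
  · intro w hw
    constructor
    · intro hsub
      have h1 : p + (1 : ℂ) • w ∈ affineQuadric := hsub ⟨1, rfl⟩
      have h2 : p + (-1 : ℂ) • w ∈ affineQuadric := hsub ⟨-1, rfl⟩
      simp only [affineQuadric, Set.mem_setOf_eq, Pi.add_apply, Pi.smul_apply,
        smul_eq_mul] at h1 h2
      have hpw : (p 0 * w 0 + p 1 * w 1 + p 2 * w 2) = 0 := by linear_combination (h1 - h2) / 4
      have hww : (w 0 ^ 2 + w 1 ^ 2 + w 2 ^ 2) = 0 := by linear_combination (h1 + h2) / 2 - hp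
      have key : ((u 0 * w 0 + u 1 * w 1 + u 2 * w 2) + Complex.I * ((p 1 * u 2 - p 2 * u 1) * w 0 + (p 2 * u 0 - p 0 * u 2) * w 1 + (p 0 * u 1 - p 1 * u 0) * w 2)) * ((u 0 * w 0 + u 1 * w 1 + u 2 * w 2) - Complex.I * ((p 1 * u 2 - p 2 * u 1) * w 0 + (p 2 * u 0 - p 0 * u 2) * w 1 + (p 0 * u 1 - p 1 * u 0) * w 2)) = 0 := by
        linear_combination ((u 0 ^ 2 + u 1 ^ 2 + u 2 ^ 2) * (w 0 ^ 2 + w 1 ^ 2 + w 2 ^ 2) - (u 0 * w 0 + u 1 * w 1 + u 2 * w 2) ^ 2) * hp + (2 * (p 0 * w 0 + p 1 * w 1 + p 2 * w 2) * (u 0 * w 0 + u 1 * w 1 + u 2 * w 2) - (p 0 * u 0 + p 1 * u 1 + p 2 * u 2) * (w 0 ^ 2 + w 1 ^ 2 + w 2 ^ 2)) * hpu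
          - (u 0 ^ 2 + u 1 ^ 2 + u 2 ^ 2) * (p 0 * w 0 + p 1 * w 1 + p 2 * w 2) * hpw + (u 0 ^ 2 + u 1 ^ 2 + u 2 ^ 2) * hww - ((p 1 * u 2 - p 2 * u 1) * w 0 + (p 2 * u 0 - p 0 * u 2) * w 1 + (p 0 * u 1 - p 1 * u 0) * w 2) ^ 2 * Complex.I_sq
      rcases mul_eq_zero.mp key with ha | ha
      · refine Or.inl ⟨(u 0 * w 0 + u 1 * w 1 + u 2 * w 2) / (u 0 ^ 2 + u 1 ^ 2 + u 2 ^ 2), ?_⟩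
        funext k
        fin_cases k <;>
          simp only [Fin.zero_eta, Fin.mk_one, Fin.reduceFinMk, Matrix.cons_val_zero,
            Matrix.cons_val_one, Matrix.cons_val_two, Matrix.head_cons, Matrix.tail_cons,
            Pi.smul_apply, smul_eq_mul]
        · rw [div_mul_eq_mul_div, eq_div_iff hs]
          linear_combination ((u 0 * w 0 + u 1 * w 1 + u 2 * w 2) * u 0 - (u 0 ^ 2 + u 1 ^ 2 + u 2 ^ 2) * w 0) * hp
            + ((p 0 * u 0 + p 1 * u 1 + p 2 * u 2) * w 0 - (u 0 * w 0 + u 1 * w 1 + u 2 * w 2) * p 0 - (p 0 * w 0 + p 1 * w 1 + p 2 * w 2) * u 0) * hpu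
            + (u 0 ^ 2 + u 1 ^ 2 + u 2 ^ 2) * p 0 * hpw - Complex.I * (p 1 * u 2 - p 2 * u 1) * ha + (p 1 * u 2 - p 2 * u 1) * ((p 1 * u 2 - p 2 * u 1) * w 0 + (p 2 * u 0 - p 0 * u 2) * w 1 + (p 0 * u 1 - p 1 * u 0) * w 2) * Complex.I_sq
        · rw [div_mul_eq_mul_div, eq_div_iff hs]
          linear_combination ((u 0 * w 0 + u 1 * w 1 + u 2 * w 2) * u 1 - (u 0 ^ 2 + u 1 ^ 2 + u 2 ^ 2) * w 1) * hp
            + ((p 0 * u 0 + p 1 * u 1 + p 2 * u 2) * w 1 - (u 0 * w 0 + u 1 * w 1 + u 2 * w 2) * p 1 - (p 0 * w 0 + p 1 * w 1 + p 2 * w 2) * u 1) * hpu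
            + (u 0 ^ 2 + u 1 ^ 2 + u 2 ^ 2) * p 1 * hpw - Complex.I * (p 2 * u 0 - p 0 * u 2) * ha + (p 2 * u 0 - p 0 * u 2) * ((p 1 * u 2 - p 2 * u 1) * w 0 + (p 2 * u 0 - p 0 * u 2) * w 1 + (p 0 * u 1 - p 1 * u 0) * w 2) * Complex.I_sq
        · rw [div_mul_eq_mul_div, eq_div_iff hs]
          linear_combination ((u 0 * w 0 + u 1 * w 1 + u 2 * w 2) * u 2 - (u 0 ^ 2 + u 1 ^ 2 + u 2 ^ 2) * w 2) * hp
            + ((p 0 * u 0 + p 1 * u 1 + p 2 * u 2) * w 2 - (u 0 * w 0 + u 1 * w 1 + u 2 * w 2) * p 2 - (p 0 * w 0 + p 1 * w 1 + p 2 * w 2) * u 2) * hpu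
            + (u 0 ^ 2 + u 1 ^ 2 + u 2 ^ 2) * p 2 * hpw - Complex.I * (p 0 * u 1 - p 1 * u 0) * ha + (p 0 * u 1 - p 1 * u 0) * ((p 1 * u 2 - p 2 * u 1) * w 0 + (p 2 * u 0 - p 0 * u 2) * w 1 + (p 0 * u 1 - p 1 * u 0) * w 2) * Complex.I_sq
      · refine Or.inr ⟨(u 0 * w 0 + u 1 * w 1 + u 2 * w 2) / (u 0 ^ 2 + u 1 ^ 2 + u 2 ^ 2), ?_⟩
        funext k
        fin_cases k <;>
          simp only [Fin.zero_eta, Fin.mk_one, Fin.reduceFinMk, Matrix.cons_val_zero,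
            Matrix.cons_val_one, Matrix.cons_val_two, Matrix.head_cons, Matrix.tail_cons,
            Pi.smul_apply, smul_eq_mul]
        · rw [div_mul_eq_mul_div, eq_div_iff hs]
          linear_combination ((u 0 * w 0 + u 1 * w 1 + u 2 * w 2) * u 0 - (u 0 ^ 2 + u 1 ^ 2 + u 2 ^ 2) * w 0) * hp
            + ((p 0 * u 0 + p 1 * u 1 + p 2 * u 2) * w 0 - (u 0 * w 0 + u 1 * w 1 + u 2 * w 2) * p 0 - (p 0 * w 0 + p 1 * w 1 + p 2 * w 2) * u 0) * hpu
            + (u 0 ^ 2 + u 1 ^ 2 + u 2 ^ 2) * p 0 * hpw + Complex.I * (p 1 * u 2 - p 2 * u 1) * ha + (p 1 * u 2 - p 2 * u 1) * ((p 1 * u 2 - p 2 * u 1) * w 0 + (p 2 * u 0 - p 0 * u 2) * w 1 + (p 0 * u 1 - p 1 * u 0) * w 2) * Complex.I_sq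
        · rw [div_mul_eq_mul_div, eq_div_iff hs]
          linear_combination ((u 0 * w 0 + u 1 * w 1 + u 2 * w 2) * u 1 - (u 0 ^ 2 + u 1 ^ 2 + u 2 ^ 2) * w 1) * hp
            + ((p 0 * u 0 + p 1 * u 1 + p 2 * u 2) * w 1 - (u 0 * w 0 + u 1 * w 1 + u 2 * w 2) * p 1 - (p 0 * w 0 + p 1 * w 1 + p 2 * w 2) * u 1) * hpu
            + (u 0 ^ 2 + u 1 ^ 2 + u 2 ^ 2) * p 1 * hpw + Complex.I * (p 2 * u 0 - p 0 * u 2) * ha + (p 2 * u 0 - p 0 * u 2) * ((p 1 * u 2 - p 2 * u 1) * w 0 + (p 2 * u 0 - p 0 * u 2) * w 1 + (p 0 * u 1 - p 1 * u 0) * w 2) * Complex.I_sq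
        · rw [div_mul_eq_mul_div, eq_div_iff hs]
          linear_combination ((u 0 * w 0 + u 1 * w 1 + u 2 * w 2) * u 2 - (u 0 ^ 2 + u 1 ^ 2 + u 2 ^ 2) * w 2) * hp
            + ((p 0 * u 0 + p 1 * u 1 + p 2 * u 2) * w 2 - (u 0 * w 0 + u 1 * w 1 + u 2 * w 2) * p 2 - (p 0 * w 0 + p 1 * w 1 + p 2 * w 2) * u 2) * hpu
            + (u 0 ^ 2 + u 1 ^ 2 + u 2 ^ 2) * p 2 * hpw + Complex.I * (p 0 * u 1 - p 1 * u 0) * ha + (p 0 * u 1 - p 1 * u 0) * ((p 1 * u 2 - p 2 * u 1) * w 0 + (p 2 * u 0 - p 0 * u 2) * w 1 + (p 0 * u 1 - p 1 * u 0) * w 2) * Complex.I_sq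
    · rintro (⟨c, rfl⟩ | ⟨c, rfl⟩) x ⟨t, rfl⟩ <;>
        simp only [affineQuadric, Set.mem_setOf_eq, Pi.add_apply, Pi.smul_apply,
          smul_eq_mul, Matrix.cons_val_zero, Matrix.cons_val_one, Matrix.cons_val_two,
          Matrix.head_cons, Matrix.tail_cons, Fin.isValue] <;>
        linear_combination (1 - t ^ 2 * c ^ 2 * (u 0 ^ 2 + u 1 ^ 2 + u 2 ^ 2)) * hp + (2 * t * c + t ^ 2 * c ^ 2 * (p 0 * u 0 + p 1 * u 1 + p 2 * u 2)) * hpu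
          + t ^ 2 * c ^ 2 * ((p 1 * u 2 - p 2 * u 1) ^ 2 + (p 2 * u 0 - p 0 * u 2) ^ 2 + (p 0 * u 1 - p 1 * u 0) ^ 2) * Complex.I_sq

/-- Through every point `p` of the affine quadric `𝒬` there are exactly
two complex lines contained in `𝒬`: there exist nonzero vectors `w⁺, w⁻ ∈ ℂ³`, neither
a complex scalar multiple of the other, such that for every nonzero `w ∈ ℂ³` the line
`{p + tw : t ∈ ℂ}` is contained in `𝒬` if and only if `w` is a complex scalar multiple
of `w⁺` or of `w⁻`. -/
theorem two_lines_through_each_point_of_quadric (p : Fin 3 → ℂ)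
    (hp : p 0 ^ 2 + p 1 ^ 2 + p 2 ^ 2 = 1) :
    ∃ wp wm : Fin 3 → ℂ, wp ≠ 0 ∧ wm ≠ 0 ∧
      (¬ ∃ c : ℂ, wm = c • wp) ∧ (¬ ∃ c : ℂ, wp = c • wm) ∧
      ∀ w : Fin 3 → ℂ, w ≠ 0 →
        ({x | ∃ t : ℂ, x = p + t • w} ⊆ affineQuadric ↔
          (∃ c : ℂ, w = c • wp) ∨ (∃ c : ℂ, w = c • wm)) := by
  have h3 : (1 : ℂ) - p 0 ^ 2 ≠ 0 ∨ (1 : ℂ) - p 1 ^ 2 ≠ 0 ∨ (1 : ℂ) - p 2 ^ 2 ≠ 0 := by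
    by_contra h
    push_neg at h
    obtain ⟨h0, h1, h2⟩ := h
    have : (2 : ℂ) = 0 := by linear_combination h0 + h1 + h2 + hp
    exact absurd this (by norm_num)
  rcases h3 with h | h | h
  · refine master p ![0, p 2, -(p 1)] hp ?_ ?_
    · simp only [Matrix.cons_val_zero, Matrix.cons_val_one, Matrix.cons_val_two,
        Matrix.head_cons, Matrix.tail_cons]
      ring
    · simp only [Matrix.cons_val_zero, Matrix.cons_val_one, Matrix.cons_val_two,
        Matrix.head_cons, Matrix.tail_cons]
      intro hz
      exact h (by linear_combination hz - hp)
  · refine master p ![-(p 2), 0, p 0] hp ?_ ?_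
    · simp only [Matrix.cons_val_zero, Matrix.cons_val_one, Matrix.cons_val_two,
        Matrix.head_cons, Matrix.tail_cons]
      ring
    · simp only [Matrix.cons_val_zero, Matrix.cons_val_one, Matrix.cons_val_two,
        Matrix.head_cons, Matrix.tail_cons]
      intro hz
      exact h (by linear_combination hz - hp)
  · refine master p ![p 1, -(p 0), 0] hp ?_ ?_
    · simp only [Matrix.cons_val_zero, Matrix.cons_val_one, Matrix.cons_val_two,
        Matrix.head_cons, Matrix.tail_cons]
      ring
    · simp only [Matrix.cons_val_zero, Matrix.cons_val_one, Matrix.cons_val_two,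
        Matrix.head_cons, Matrix.tail_cons]
      intro hz
      exact h (by linear_combination hz - hp)
end

section
/- Every affine complex line contained in the quadric 𝒬 contains exactly one point all of whose coordinates are real: if p, w ∈ ℂ³ with w ≠ 0 and {p + tw : t ∈ ℂ} ⊆ 𝒬, then there is exactly one t ∈ ℂ such that p + tw ∈ ℝ³. Equivalently, each complex line in 𝒬 meets the real locus L = 𝒬 ∩ ℝ³ (the unit 2-sphere) in exactly one point. -/
private lemma aux_gzero (G P S : ℝ) (h1 : G * P = 0) (h2 : P ^ 2 = G ^ 2 + S ^ 2)
    (hS : 0 < S) : G = 0 := by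
  have h1' : G ^ 2 * P ^ 2 = 0 := by rw [← mul_pow, h1]; norm_num
  rw [h2] at h1'
  have hG2 : G ^ 2 = 0 := by
    rcases mul_eq_zero.mp h1' with h | h
    · exact h
    · nlinarith [sq_nonneg G]
  exact pow_eq_zero_iff two_ne_zero |>.mp hG2

set_option maxHeartbeats 1000000 in
private lemma key (u0 u1 u2 v0 v1 v2 q0 q1 q2 r0 r1 r2 : ℝ)
    (hC1 : u0^2+u1^2+u2^2 = v0^2+v1^2+v2^2)
    (hC2 : u0*v0+u1*v1+u2*v2 = 0)
    (hB1 : q0*u0+q1*u1+q2*u2 = r0*v0+r1*v1+r2*v2)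
    (hB2 : q0*v0+q1*v1+q2*v2 + (r0*u0+r1*u1+r2*u2) = 0)
    (hA1 : q0^2+q1^2+q2^2 - (r0^2+r1^2+r2^2) = 1)
    (hA2 : q0*r0+q1*r1+q2*r2 = 0)
    (hpos : 0 < u0^2+u1^2+u2^2) :
    ∃! t : ℂ, r0 + t.re*v0 + t.im*u0 = 0 ∧ r1 + t.re*v1 + t.im*u1 = 0 ∧
      r2 + t.re*v2 + t.im*u2 = 0 := by
  have hSne : (u0^2+u1^2+u2^2) ≠ 0 := ne_of_gt hpos
  -- γ·γ' = 0
  have h1 : (r0*(u1*v2-u2*v1)+r1*(u2*v0-u0*v2)+r2*(u0*v1-u1*v0)) * (q0*(u1*v2-u2*v1)+q1*(u2*v0-u0*v2)+q2*(u0*v1-u1*v0)) = 0 := by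
    linear_combination ((r0*u0+r1*u1+r2*u2)*(q0*v0+q1*v1+q2*v2)+(r0*v0+r1*v1+r2*v2)*(q0*u0+q1*u1+q2*u2)-(q0*r0+q1*r1+q2*r2)*(u0*v0+u1*v1+u2*v2)) * hC2 - ((r0*u0+r1*u1+r2*u2)*(v0^2+v1^2+v2^2)) * hB1 - ((r0*v0+r1*v1+r2*v2)*(u0^2+u1^2+u2^2)) * hB2 + ((u0^2+u1^2+u2^2)*(v0^2+v1^2+v2^2)) * hA2 + ((r0*u0+r1*u1+r2*u2)*(r0*v0+r1*v1+r2*v2)) * hC1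
  -- γ'^2 = γ^2 + S^2
  have h2 : (q0*(u1*v2-u2*v1)+q1*(u2*v0-u0*v2)+q2*(u0*v1-u1*v0)) ^ 2 = (r0*(u1*v2-u2*v1)+r1*(u2*v0-u0*v2)+r2*(u0*v1-u1*v0)) ^ 2 + (u0^2+u1^2+u2^2) ^ 2 := by
    linear_combination (2*((q0*u0+q1*u1+q2*u2)*(q0*v0+q1*v1+q2*v2)-(r0*u0+r1*u1+r2*u2)*(r0*v0+r1*v1+r2*v2)) - ((q0^2+q1^2+q2^2)-(r0^2+r1^2+r2^2))*(u0*v0+u1*v1+u2*v2)) * hC2 - ((v0^2+v1^2+v2^2)*((q0*u0+q1*u1+q2*u2)+(r0*v0+r1*v1+r2*v2))) * hB1 - ((u0^2+u1^2+u2^2)*((q0*v0+q1*v1+q2*v2)-(r0*u0+r1*u1+r2*u2))) * hB2 + ((r0*v0+r1*v1+r2*v2)^2-(r0*u0+r1*u1+r2*u2)^2-(u0^2+u1^2+u2^2)) * hC1 + ((u0^2+u1^2+u2^2)*(v0^2+v1^2+v2^2)) * hA1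
  have hg : (r0*(u1*v2-u2*v1)+r1*(u2*v0-u0*v2)+r2*(u0*v1-u1*v0)) = 0 := aux_gzero _ _ _ h1 h2 hpos
  -- the three component identities
  have k0 : (u0^2+u1^2+u2^2)*((u0^2+u1^2+u2^2)*r0 - (r0*u0+r1*u1+r2*u2)*u0 - (r0*v0+r1*v1+r2*v2)*v0) = 0 := by
    linear_combination (u1*v2-u2*v1) * hg - ((r0*u0+r1*u1+r2*u2)*v0+(r0*v0+r1*v1+r2*v2)*u0-(u0*v0+u1*v1+u2*v2)*r0) * hC2 + ((u0^2+u1^2+u2^2)*r0 - (r0*u0+r1*u1+r2*u2)*u0) * hC1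
  have k1 : (u0^2+u1^2+u2^2)*((u0^2+u1^2+u2^2)*r1 - (r0*u0+r1*u1+r2*u2)*u1 - (r0*v0+r1*v1+r2*v2)*v1) = 0 := by
    linear_combination (u2*v0-u0*v2) * hg - ((r0*u0+r1*u1+r2*u2)*v1+(r0*v0+r1*v1+r2*v2)*u1-(u0*v0+u1*v1+u2*v2)*r1) * hC2 + ((u0^2+u1^2+u2^2)*r1 - (r0*u0+r1*u1+r2*u2)*u1) * hC1
  have k2 : (u0^2+u1^2+u2^2)*((u0^2+u1^2+u2^2)*r2 - (r0*u0+r1*u1+r2*u2)*u2 - (r0*v0+r1*v1+r2*v2)*v2) = 0 := by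
    linear_combination (u0*v1-u1*v0) * hg - ((r0*u0+r1*u1+r2*u2)*v2+(r0*v0+r1*v1+r2*v2)*u2-(u0*v0+u1*v1+u2*v2)*r2) * hC2 + ((u0^2+u1^2+u2^2)*r2 - (r0*u0+r1*u1+r2*u2)*u2) * hC1
  have k0' : (u0^2+u1^2+u2^2)*r0 - (r0*u0+r1*u1+r2*u2)*u0 - (r0*v0+r1*v1+r2*v2)*v0 = 0 :=
    (mul_eq_zero.mp k0).resolve_left hSne
  have k1' : (u0^2+u1^2+u2^2)*r1 - (r0*u0+r1*u1+r2*u2)*u1 - (r0*v0+r1*v1+r2*v2)*v1 = 0 :=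
    (mul_eq_zero.mp k1).resolve_left hSne
  have k2' : (u0^2+u1^2+u2^2)*r2 - (r0*u0+r1*u1+r2*u2)*u2 - (r0*v0+r1*v1+r2*v2)*v2 = 0 :=
    (mul_eq_zero.mp k2).resolve_left hSne
  set S := u0^2+u1^2+u2^2 with hSdef
  refine ⟨⟨-(r0*v0+r1*v1+r2*v2)/S, -(r0*u0+r1*u1+r2*u2)/S⟩, ⟨?_, ?_, ?_⟩, ?_⟩
  · show r0 + -(r0*v0+r1*v1+r2*v2)/S * v0 + -(r0*u0+r1*u1+r2*u2)/S * u0 = 0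
    field_simp
    linear_combination k0'
  · show r1 + -(r0*v0+r1*v1+r2*v2)/S * v1 + -(r0*u0+r1*u1+r2*u2)/S * u1 = 0
    field_simp
    linear_combination k1'
  · show r2 + -(r0*v0+r1*v1+r2*v2)/S * v2 + -(r0*u0+r1*u1+r2*u2)/S * u2 = 0
    field_simp
    linear_combination k2'
  · rintro y ⟨hy0, hy1, hy2⟩
    have ht0 : r0 + -(r0*v0+r1*v1+r2*v2)/S * v0 + -(r0*u0+r1*u1+r2*u2)/S * u0 = 0 := by field_simp; linear_combination k0'
    have ht1 : r1 + -(r0*v0+r1*v1+r2*v2)/S * v1 + -(r0*u0+r1*u1+r2*u2)/S * u1 = 0 := by field_simp; linear_combination k1'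
    have ht2 : r2 + -(r0*v0+r1*v1+r2*v2)/S * v2 + -(r0*u0+r1*u1+r2*u2)/S * u2 = 0 := by field_simp; linear_combination k2'
    have hvpos : 0 < v0^2+v1^2+v2^2 := hC1 ▸ hpos
    have hre : (y.re - (-(r0*v0+r1*v1+r2*v2)/S)) * (v0^2+v1^2+v2^2) = 0 := by
      linear_combination v0*hy0 + v1*hy1 + v2*hy2 - v0*ht0 - v1*ht1 - v2*ht2 - (y.im - (-(r0*u0+r1*u1+r2*u2)/S)) * hC2
    have him : (y.im - (-(r0*u0+r1*u1+r2*u2)/S)) * (u0^2+u1^2+u2^2) = 0 := by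
      linear_combination u0*hy0 + u1*hy1 + u2*hy2 - u0*ht0 - u1*ht1 - u2*ht2 - (y.re - (-(r0*v0+r1*v1+r2*v2)/S)) * hC2
    have hre' : y.re = -(r0*v0+r1*v1+r2*v2)/S := by
      have := (mul_eq_zero.mp hre).resolve_right (ne_of_gt hvpos)
      linarith
    have him' : y.im = -(r0*u0+r1*u1+r2*u2)/S := by
      have := (mul_eq_zero.mp him).resolve_right hSne
      linarith
    exact Complex.ext hre' him'

set_option maxHeartbeats 1000000 in
/-- Every affine complex line contained in the quadric `𝒬` contains
exactly one point all of whose coordinates are real: if `w ≠ 0` and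
`{p + tw : t ∈ ℂ} ⊆ 𝒬`, then there is exactly one `t ∈ ℂ` with `p + tw ∈ ℝ³`.
Equivalently, each complex line in `𝒬` meets the real locus `L = 𝒬 ∩ ℝ³`
(the unit 2-sphere) in exactly one point. -/
theorem line_in_quadric_meets_real_locus_once (p w : Fin 3 → ℂ) (hw : w ≠ 0)
    (hline : {x | ∃ t : ℂ, x = p + t • w} ⊆ affineQuadric) :
    ∃! t : ℂ, ∀ j : Fin 3, ((p + t • w) j).im = 0 := by
  have e : ∀ t : ℂ, (p 0 + t * w 0)^2 + (p 1 + t * w 1)^2 + (p 2 + t * w 2)^2 = 1 := by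
    intro t
    have h := hline ⟨t, rfl⟩
    simpa [affineQuadric] using h
  have hA : p 0 * p 0 + p 1 * p 1 + p 2 * p 2 = 1 := by linear_combination e 0
  have hB : p 0 * w 0 + p 1 * w 1 + p 2 * w 2 = 0 := by
    linear_combination (e 1)/4 - (e (-1))/4
  have hC : w 0 * w 0 + w 1 * w 1 + w 2 * w 2 = 0 := by
    linear_combination (e 1)/2 + (e (-1))/2 - e 0
  have hAre := congrArg Complex.re hA
  have hAim := congrArg Complex.im hA
  have hBre := congrArg Complex.re hB
  have hBim := congrArg Complex.im hB
  have hCre := congrArg Complex.re hC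
  have hCim := congrArg Complex.im hC
  simp only [Complex.add_re, Complex.add_im, Complex.mul_re, Complex.mul_im,
    Complex.one_re, Complex.one_im, Complex.zero_re, Complex.zero_im] at hAre hAim hBre hBim hCre hCim
  have hC1 : (w 0).re^2+(w 1).re^2+(w 2).re^2 = (w 0).im^2+(w 1).im^2+(w 2).im^2 := by
    linear_combination hCre
  have hC2 : (w 0).re*(w 0).im+(w 1).re*(w 1).im+(w 2).re*(w 2).im = 0 := by
    linear_combination hCim / 2
  have hB1 : (p 0).re*(w 0).re+(p 1).re*(w 1).re+(p 2).re*(w 2).re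
      = (p 0).im*(w 0).im+(p 1).im*(w 1).im+(p 2).im*(w 2).im := by
    linear_combination hBre
  have hB2 : (p 0).re*(w 0).im+(p 1).re*(w 1).im+(p 2).re*(w 2).im
      + ((p 0).im*(w 0).re+(p 1).im*(w 1).re+(p 2).im*(w 2).re) = 0 := by
    linear_combination hBim
  have hA1 : (p 0).re^2+(p 1).re^2+(p 2).re^2 - ((p 0).im^2+(p 1).im^2+(p 2).im^2) = 1 := by
    linear_combination hAre
  have hA2 : (p 0).re*(p 0).im+(p 1).re*(p 1).im+(p 2).re*(p 2).im = 0 := by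
    linear_combination hAim / 2
  have hwj : ∃ j, w j ≠ 0 := by
    by_contra h
    push_neg at h
    exact hw (funext h)
  obtain ⟨j, hj⟩ := hwj
  have hj' : (w j).re ≠ 0 ∨ (w j).im ≠ 0 := by
    by_contra h
    push_neg at h
    exact hj (Complex.ext h.1 h.2)
  have hpos : 0 < (w 0).re^2+(w 1).re^2+(w 2).re^2 := by
    have hj3 : j = 0 ∨ j = 1 ∨ j = 2 := by omega
    rcases hj3 with rfl | rfl | rfl <;> rcases hj' with h | h <;>
      nlinarith [sq_nonneg (w 0).re, sq_nonneg (w 1).re, sq_nonneg (w 2).re,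
        sq_nonneg (w 0).im, sq_nonneg (w 1).im, sq_nonneg (w 2).im,
        sq_pos_of_ne_zero h]
  obtain ⟨t, ⟨ht0, ht1, ht2⟩, hu⟩ := key (w 0).re (w 1).re (w 2).re (w 0).im (w 1).im (w 2).im
    (p 0).re (p 1).re (p 2).re (p 0).im (p 1).im (p 2).im hC1 hC2 hB1 hB2 hA1 hA2 hpos
  refine ⟨t, ?_, ?_⟩
  · intro j
    have hj3 : j = 0 ∨ j = 1 ∨ j = 2 := by omega
    rcases hj3 with rfl | rfl | rfl <;>
      simp only [Pi.add_apply, Pi.smul_apply, smul_eq_mul, Complex.add_im, Complex.mul_im,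
        Fin.isValue] <;> linarith
  · intro y hy
    apply hu
    have h0 := hy 0
    have h1 := hy 1
    have h2 := hy 2
    simp only [Pi.add_apply, Pi.smul_apply, smul_eq_mul, Complex.add_im, Complex.mul_im,
      Fin.isValue] at h0 h1 h2
    exact ⟨by linarith, by linarith, by linarith⟩
end

section
/- Let u, v, u̇, v̇ ∈ ℝ³ with ⟨u,v⟩ = 0 and v ≠ 0. Then Σⱼ Im(ϖⱼ(u,v)) · (d/dt)|_{t=0} Re(ϖⱼ(u + t u̇, v + t v̇)) = (cosh‖v‖ sinh‖v‖ / ‖v‖) · ⟨v, u̇⟩. In other words, at every point of T*S² with v ≠ 0 the pullback under ϖ of the Liouville 1-form Σⱼ yⱼ dxⱼ of ℂ³ equals (cosh‖v‖ sinh‖v‖/‖v‖) times the canonical 1-form λ_can = Σⱼ vⱼ duⱼ. -/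
open RealInnerProductSpace
open scoped Classical

/-!
The real part of `ϖ(u,v)` is `cosh‖v‖ • u` and, for `v ≠ 0`, its imaginary part is
`(sinh‖v‖/‖v‖) • v`. Differentiating the real part along `(u̇, v̇)` gives
`cosh‖v‖ • u̇` plus a multiple of `u`, coming from the variation of `‖v‖`; paired with the
imaginary part, that multiple of `u` is killed by `⟨u, v⟩ = 0`, leaving
`(cosh‖v‖ sinh‖v‖/‖v‖) ⟨v, u̇⟩`.
-/

theorem HasDerivAt.norm {F : Type*} [NormedAddCommGroup F] [InnerProductSpace ℝ F]
    {f : ℝ → F} {f' : F} {x : ℝ} (hf : HasDerivAt f f' x) (hx : f x ≠ 0) :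
    HasDerivAt (fun t => ‖f t‖) (⟪f x, f'⟫ / ‖f x‖) x := by
  have hsq : ‖f x‖ ^ 2 ≠ 0 := by positivity
  convert hf.norm_sq.sqrt hsq using 1
  · simp only [Real.sqrt_sq (norm_nonneg _)]
  · rw [Real.sqrt_sq (norm_nonneg _)]
    field_simp

theorem EuclideanSpace.real_inner_eq_sum {ι : Type*} [Fintype ι] (x y : EuclideanSpace ℝ ι) :
    ⟪x, y⟫ = ∑ i, x i * y i := by
  simp [PiLp.inner_apply, mul_comm]

theorem varpi_re (u v : EuclideanSpace ℝ (Fin 3)) (j : Fin 3) :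
    (varpi u v j).re = Real.cosh ‖v‖ * u j := by
  simp [varpi, mul_comm]

theorem varpi_im_of_ne_zero (u : EuclideanSpace ℝ (Fin 3)) {v : EuclideanSpace ℝ (Fin 3)}
    (hv : v ≠ 0) (j : Fin 3) : (varpi u v j).im = Real.sinh ‖v‖ / ‖v‖ * v j := by
  simp [varpi, hv, Complex.sinh_ofReal_re, mul_comm]

theorem hasDerivAt_varpi_re_line (u du : EuclideanSpace ℝ (Fin 3))
    {v : EuclideanSpace ℝ (Fin 3)} (hv : v ≠ 0) (dv : EuclideanSpace ℝ (Fin 3)) (j : Fin 3) :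
    HasDerivAt (fun t : ℝ => (varpi (u + t • du) (v + t • dv) j).re)
      (Real.cosh ‖v‖ * du j + Real.sinh ‖v‖ * ⟪v, dv⟫ / ‖v‖ * u j) 0 := by
  have hline : HasDerivAt (fun t : ℝ => v + t • dv) dv 0 := by
    simpa using ((hasDerivAt_id (0 : ℝ)).smul_const dv).const_add v
  have hcosh : HasDerivAt (fun t : ℝ => Real.cosh ‖v + t • dv‖)
      (Real.sinh ‖v‖ * (⟪v, dv⟫ / ‖v‖)) 0 := by
    simpa using (hline.norm (by simpa using hv)).cosh
  have hcoord : HasDerivAt (fun t : ℝ => u j + t * du j) (du j) 0 := by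
    simpa using ((hasDerivAt_id (0 : ℝ)).mul_const (du j)).const_add (u j)
  have hfun : (fun t : ℝ => (varpi (u + t • du) (v + t • dv) j).re)
      = fun t => Real.cosh ‖v + t • dv‖ * (u j + t * du j) := by
    ext t; simp [varpi_re]
  rw [hfun]
  exact (hcosh.fun_mul hcoord).congr_deriv (by simp; ring)

/-- For `u, v, u̇, v̇ ∈ ℝ³` with `⟨u,v⟩ = 0` and `v ≠ 0`,
`Σⱼ Im(ϖⱼ(u,v)) · (d/dt)|₀ Re(ϖⱼ(u + t u̇, v + t v̇)) = (cosh‖v‖ sinh‖v‖/‖v‖)·⟨v,u̇⟩`;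
i.e. at points of `T*S²` with `v ≠ 0`, the pullback under `ϖ` of the Liouville 1-form
`Σⱼ yⱼ dxⱼ` of `ℂ³` equals `(cosh‖v‖ sinh‖v‖/‖v‖)` times the canonical 1-form
`λ_can = Σⱼ vⱼ duⱼ`. -/
theorem varpi_pullback_liouville_form (u v du dv : EuclideanSpace ℝ (Fin 3))
    (huv : ⟪u, v⟫ = 0) (hv : v ≠ 0) :
    ∑ j : Fin 3, (varpi u v j).im *
        deriv (fun t : ℝ => (varpi (u + t • du) (v + t • dv) j).re) 0 =
      Real.cosh ‖v‖ * Real.sinh ‖v‖ / ‖v‖ * ⟪v, du⟫ := by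
  simp only [varpi_im_of_ne_zero u hv, (hasDerivAt_varpi_re_line u du hv dv _).deriv]
  have hvu : ∑ j, v j * u j = 0 := by
    rw [← EuclideanSpace.real_inner_eq_sum, real_inner_comm, huv]
  calc _ = Real.sinh ‖v‖ / ‖v‖ * (Real.cosh ‖v‖ * ∑ j, v j * du j
        + Real.sinh ‖v‖ * ⟪v, dv⟫ / ‖v‖ * ∑ j, v j * u j) := by
          simp only [Finset.mul_sum, ← Finset.sum_add_distrib]
          exact Finset.sum_congr rfl fun j _ => by ring
    _ = _ := by rw [hvu, ← EuclideanSpace.real_inner_eq_sum]; ring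
end

section
/- Let (u,v) ∈ ℝ³×ℝ³ with ‖u‖ = 1, ⟨u,v⟩ = 0 and v ≠ 0. Then the set of pairs (u̇, v̇) ∈ ℝ³×ℝ³ satisfying ⟨u,u̇⟩ = 0, ⟨v,u̇⟩ + ⟨u,v̇⟩ = 0, ⟨v,v̇⟩ = 0 and ⟨v,u̇⟩ = 0 is exactly the two-dimensional linear span of (u×v, 0) and (0, u×v). (This identifies the contact hyperplane distribution ζ = ker λ_can on the level set M_c of T*S².) -/
/-- The Euclidean dot product on `ℝ³`. -/
def dot3 (u v : Fin 3 → ℝ) : ℝ := ∑ j, u j * v j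

lemma key_span (u v w : Fin 3 → ℝ) (hu : dot3 u u = 1) (huv : dot3 u v = 0)
    (hvv : dot3 v v ≠ 0) (h1 : dot3 u w = 0) (h2 : dot3 v w = 0) :
    ∃ s : ℝ, w = s • (crossProduct u v) := by
  refine ⟨dot3 (crossProduct u v) w / dot3 v v, ?_⟩
  simp only [dot3, Fin.sum_univ_three] at hu huv h1 h2
  have hmain : (dot3 v v) • w = (dot3 (crossProduct u v) w) • (crossProduct u v) := by
    funext i
    fin_cases i
    · simp only [dot3, Fin.sum_univ_three, cross_apply, Pi.smul_apply, smul_eq_mul,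
        Fin.mk_zero, Fin.isValue, Fin.reduceFinMk, Matrix.cons_val_zero, Matrix.cons_val_one, Matrix.head_cons,
        Matrix.cons_val_two, Matrix.tail_cons]
      linear_combination (-(v 0 ^ 2 + v 1 ^ 2 + v 2 ^ 2) * w 0) * hu
        + ((u 0 * v 0 + u 1 * v 1 + u 2 * v 2) * w 0) * huv
        + (u 0 * (v 0 ^ 2 + v 1 ^ 2 + v 2 ^ 2) - v 0 * (u 0 * v 0 + u 1 * v 1 + u 2 * v 2)) * h1
        + (v 0 * (u 0 ^ 2 + u 1 ^ 2 + u 2 ^ 2) - u 0 * (u 0 * v 0 + u 1 * v 1 + u 2 * v 2)) * h2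
    · simp only [dot3, Fin.sum_univ_three, cross_apply, Pi.smul_apply, smul_eq_mul,
        Fin.mk_one, Fin.isValue, Fin.reduceFinMk, Matrix.cons_val_zero, Matrix.cons_val_one, Matrix.head_cons,
        Matrix.cons_val_two, Matrix.tail_cons]
      linear_combination (-(v 0 ^ 2 + v 1 ^ 2 + v 2 ^ 2) * w 1) * hu
        + ((u 0 * v 0 + u 1 * v 1 + u 2 * v 2) * w 1) * huv
        + (u 1 * (v 0 ^ 2 + v 1 ^ 2 + v 2 ^ 2) - v 1 * (u 0 * v 0 + u 1 * v 1 + u 2 * v 2)) * h1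
        + (v 1 * (u 0 ^ 2 + u 1 ^ 2 + u 2 ^ 2) - u 1 * (u 0 * v 0 + u 1 * v 1 + u 2 * v 2)) * h2
    · simp only [dot3, Fin.sum_univ_three, cross_apply, Pi.smul_apply, smul_eq_mul,
        Fin.isValue, Fin.reduceFinMk, Matrix.cons_val_zero, Matrix.cons_val_one, Matrix.head_cons,
        Matrix.cons_val_two, Matrix.tail_cons]
      linear_combination (-(v 0 ^ 2 + v 1 ^ 2 + v 2 ^ 2) * w 2) * hu
        + ((u 0 * v 0 + u 1 * v 1 + u 2 * v 2) * w 2) * huv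
        + (u 2 * (v 0 ^ 2 + v 1 ^ 2 + v 2 ^ 2) - v 2 * (u 0 * v 0 + u 1 * v 1 + u 2 * v 2)) * h1
        + (v 2 * (u 0 ^ 2 + u 1 ^ 2 + u 2 ^ 2) - u 2 * (u 0 * v 0 + u 1 * v 1 + u 2 * v 2)) * h2
  have := congrArg (fun x => (dot3 v v)⁻¹ • x) hmain
  simpa [smul_smul, inv_mul_cancel₀ hvv, div_eq_inv_mul, mul_comm] using this

/-- Let `(u,v) ∈ ℝ³×ℝ³` with `‖u‖ = 1` (i.e. `⟨u,u⟩ = 1`), `⟨u,v⟩ = 0`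
and `v ≠ 0`.  Then the set of pairs `(u̇,v̇)` satisfying `⟨u,u̇⟩ = 0`,
`⟨v,u̇⟩ + ⟨u,v̇⟩ = 0`, `⟨v,v̇⟩ = 0` and `⟨v,u̇⟩ = 0` is exactly the two-dimensional
linear span of `(u×v, 0)` and `(0, u×v)`: membership is equivalent to being of the form
`(s·(u×v), t·(u×v))`, and `u×v ≠ 0` (so the span is two-dimensional).  This identifies
the contact hyperplane distribution `ζ = ker λ_can` on the level set `M_c ⊂ T*S²`. -/
theorem contact_distribution_on_level_set (u v : Fin 3 → ℝ)
    (hu : dot3 u u = 1) (huv : dot3 u v = 0) (hv : v ≠ 0) :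
    (∀ du dv : Fin 3 → ℝ,
      (dot3 u du = 0 ∧ dot3 v du + dot3 u dv = 0 ∧ dot3 v dv = 0 ∧ dot3 v du = 0) ↔
        ∃ s t : ℝ, du = s • (crossProduct u v) ∧ dv = t • (crossProduct u v)) ∧
    crossProduct u v ≠ 0 := by
  have hvv : dot3 v v ≠ 0 := by
    intro h
    apply hv
    simp only [dot3, Fin.sum_univ_three] at h
    have h0 : v 0 = 0 := by
      have : v 0 ^ 2 = 0 := by nlinarith [sq_nonneg (v 0), sq_nonneg (v 1), sq_nonneg (v 2)]
      exact sq_eq_zero_iff.mp this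
    have h1 : v 1 = 0 := by
      have : v 1 ^ 2 = 0 := by nlinarith [sq_nonneg (v 0), sq_nonneg (v 1), sq_nonneg (v 2)]
      exact sq_eq_zero_iff.mp this
    have h2 : v 2 = 0 := by
      have : v 2 ^ 2 = 0 := by nlinarith [sq_nonneg (v 0), sq_nonneg (v 1), sq_nonneg (v 2)]
      exact sq_eq_zero_iff.mp this
    funext i
    fin_cases i <;> simp [h0, h1, h2]
  have hcc : dot3 (crossProduct u v) (crossProduct u v) = dot3 v v := by
    simp only [dot3, Fin.sum_univ_three, cross_apply,
      Matrix.cons_val_zero, Matrix.cons_val_one, Matrix.head_cons,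
      Matrix.cons_val_two, Matrix.tail_cons] at hu huv ⊢
    linear_combination (v 0 ^ 2 + v 1 ^ 2 + v 2 ^ 2) * hu
      - (u 0 * v 0 + u 1 * v 1 + u 2 * v 2) * huv
  have hcne : crossProduct u v ≠ 0 := by
    intro h
    rw [h] at hcc
    simp [dot3] at hcc
    exact hvv hcc.symm
  have hucuv : dot3 u (crossProduct u v) = 0 := by
    simp only [dot3, Fin.sum_univ_three, cross_apply,
      Matrix.cons_val_zero, Matrix.cons_val_one, Matrix.head_cons,
      Matrix.cons_val_two, Matrix.tail_cons]
    ring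
  have hvcuv : dot3 v (crossProduct u v) = 0 := by
    simp only [dot3, Fin.sum_univ_three, cross_apply,
      Matrix.cons_val_zero, Matrix.cons_val_one, Matrix.head_cons,
      Matrix.cons_val_two, Matrix.tail_cons]
    ring
  have hdot_smul : ∀ (a w : Fin 3 → ℝ) (s : ℝ), dot3 a (s • w) = s * dot3 a w := by
    intro a w s
    simp only [dot3, Fin.sum_univ_three, Pi.smul_apply, smul_eq_mul]; ring
  refine ⟨fun du dv => ⟨fun ⟨h1, h2, h3, h4⟩ => ?_, fun ⟨s, t, hs, ht⟩ => ?_⟩, hcne⟩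
  · obtain ⟨s, hs⟩ := key_span u v du hu huv hvv h1 h4
    have h5 : dot3 u dv = 0 := by linarith
    obtain ⟨t, ht⟩ := key_span u v dv hu huv hvv h5 h3
    exact ⟨s, t, hs, ht⟩
  · subst hs; subst ht
    simp [hdot_smul, hucuv, hvcuv]
end
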